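/- arXiv:math/0006153 — 2 statements merged into one kernel-verified Lean document; each statement's English description precedes it below -/
import Mathlib

section
/- Suppose that for every k ∈ K_1 the column vectors φ^o_k, φ^e_k satisfy T1^{eo} φ^o_k = λ_k φ^e_k and T1^{oe} φ^e_k = λ_k φ^o_k with λ_k ∈ ℂ. Then for every N ≥ 1 and every k ∈ K_N the Bethe Ansatz vector Φ^e_k is a right eigenvector of the two-step matrix T_N^{e·e} = T_N^{eo} T_N^{oe} with eigenvalue Λ_k², and Φ^o_k is a right eigenvector of T_N^{o·o} = T_N^{oe} T_N^{eo} with eigenvalue Λ_k². -/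
open Finset BigOperators
open scoped Classical

noncomputable section

/-- The odd sites of the strip: `{y : 1 ≤ y ≤ L, y odd}`. -/
def SetO (L : ℤ) : Finset ℤ := (Finset.Icc 1 L).filter (fun y => Odd y)

/-- The even sites of the strip: `{y : 0 ≤ y ≤ L, y even}`. -/
def SetE (L : ℤ) : Finset ℤ := (Finset.Icc 0 L).filter (fun y => Even y)

/-- Parity-indexed site sets: `true ↦ odd`, `false ↦ even`. -/
def Sp (L : ℤ) : Bool → Finset ℤ := fun p => if p then SetO L else SetE L

/-- Strictly increasing `N`-tuples with entries in `S`. -/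
def UU {α : Type*} [LinearOrder α] (S : Finset α) (N : ℕ) : Finset (Fin N → α) :=
  (Fintype.piFinset (fun _ => S)).filter (fun y => ∀ i j : Fin N, i < j → y i < y j)

/-- One-step transfer matrix entry: `w y y'` when `|y - y'| = 1`, and `0` otherwise. -/
def T1 (w : ℤ → ℤ → ℂ) (y y' : ℤ) : ℂ := if |y - y'| = 1 then w y y' else 0

/-- `N`-walk transfer matrix entry: product of one-step entries. -/
def TN (w : ℤ → ℤ → ℂ) {N : ℕ} (y y' : Fin N → ℤ) : ℂ := ∏ i, T1 w (y i) (y' i)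

/-- Powers of a matrix indexed by a finite set `S`. -/
def matPow {α : Type*} [DecidableEq α] (S : Finset α) (M : α → α → ℂ) : ℕ → α → α → ℂ
  | 0 => fun y y' => if y = y' then 1 else 0
  | r + 1 => fun y y' => ∑ z ∈ S, matPow S M r y z * M z y'

/-- Weight of a family of `N` walks of length `t`. -/
def walkWeight (w : ℤ → ℤ → ℂ) (v : ℤ → ℂ) {N t : ℕ} (y : Fin N → Fin (t + 1) → ℤ) : ℂ :=
  (∏ j, v (y j 0)) * ∏ m : Fin t, ∏ j, w (y j m.castSucc) (y j m.succ)

/-- The constraints on families of non-intersecting walks in the strip `0 ≤ y ≤ L`. -/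
def stripCond (L : ℤ) {N t : ℕ} (yi yf : Fin N → ℤ) (y : Fin N → Fin (t + 1) → ℤ) : Prop :=
  (∀ j, y j 0 = yi j) ∧ (∀ j, y j (Fin.last t) = yf j) ∧
    (∀ j m, 0 ≤ y j m ∧ y j m ≤ L) ∧
    (∀ j, ∀ m : Fin t, y j m.succ = y j m.castSucc + 1 ∨ y j m.succ = y j m.castSucc - 1) ∧
    (∀ m, ∀ i j : Fin N, i < j → y i m < y j m)

/-- The `N`-walk strip generating function `Z^N_t(y^i → y^f)`. -/
def Zgen (L : ℤ) (w : ℤ → ℤ → ℂ) (v : ℤ → ℂ) (N t : ℕ) (yi yf : Fin N → ℤ) : ℂ :=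
  ∑ y ∈ (Fintype.piFinset
      (fun _ : Fin N => Fintype.piFinset (fun _ : Fin (t + 1) => Finset.Icc 0 L))).filter
        (stripCond L yi yf), walkWeight w v y

/-- The constraints on families of non-intersecting walks with a single wall `y ≥ 0`. -/
def barCond {N t : ℕ} (yi yf : Fin N → ℤ) (y : Fin N → Fin (t + 1) → ℤ) : Prop :=
  (∀ j, y j 0 = yi j) ∧ (∀ j, y j (Fin.last t) = yf j) ∧
    (∀ j m, 0 ≤ y j m) ∧
    (∀ j, ∀ m : Fin t, y j m.succ = y j m.castSucc + 1 ∨ y j m.succ = y j m.castSucc - 1) ∧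
    (∀ m, ∀ i j : Fin N, i < j → y i m < y j m)

/-- The one-wall `N`-walk generating function `Z̄^N_t(y^i → y^f)`. -/
def Zbar (w : ℤ → ℤ → ℂ) (v : ℤ → ℂ) (N t : ℕ) (yi yf : Fin N → ℤ) : ℂ :=
  ∑ᶠ (y : Fin N → Fin (t + 1) → ℤ) (_ : barCond yi yf y), walkWeight w v y

/-- The Bethe Ansatz determinant built from a family of one-walk vectors. -/
def BA {K X : Type*} {N : ℕ} (φ : K → X → ℂ) (k : Fin N → K) (y : Fin N → X) : ℂ :=
  ∑ σ : Equiv.Perm (Fin N), ((Equiv.Perm.sign σ : ℤ) : ℂ) * ∏ a, φ (k (σ a)) (y a)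

end

noncomputable section AuxBethe

variable {K : Type*} {N : ℕ}

lemma strictMono_range_inj_fin {n : ℕ} {γ : Type*} [Preorder γ] {f g : Fin n → γ}
    (hf : StrictMono f) (hg : StrictMono g) (h : Set.range f = Set.range g) : f = g :=
  (@StrictMono.range_inj (Fin n) γ _ _ (inferInstance : WellFoundedLT (Fin n)) f g hf hg).mp h

lemma BA_eq_det (φ : K → ℤ → ℂ) (k : Fin N → K) (y : Fin N → ℤ) :
    BA φ k y = Matrix.det (Matrix.of fun b a => φ (k b) (y a)) := by
  rw [Matrix.det_apply]
  simp [BA, Units.smul_def, zsmul_eq_mul]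

lemma BA_zero (φ : K → ℤ → ℂ) (k : Fin N → K) (y : Fin N → ℤ)
    (h : ¬ Function.Injective y) : BA φ k y = 0 := by
  rw [Function.not_injective_iff] at h
  obtain ⟨a, b, hy, hab⟩ := h
  rw [BA_eq_det]
  exact Matrix.det_zero_of_column_eq hab (fun i => by simp [hy])

lemma BA_comp (φ : K → ℤ → ℂ) (k : Fin N → K) (y : Fin N → ℤ) (σ : Equiv.Perm (Fin N)) :
    BA φ k (y ∘ σ) = ((Equiv.Perm.sign σ : ℤ) : ℂ) * BA φ k y := by
  rw [BA_eq_det, BA_eq_det]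
  rw [show (Matrix.of fun b a => φ (k b) ((y ∘ σ) a))
      = (Matrix.of fun b a => φ (k b) (y a)).submatrix id σ from rfl, Matrix.det_permute']

lemma mem_UU_iff {α : Type*} [LinearOrder α] {S : Finset α} {y : Fin N → α} :
    y ∈ UU S N ↔ (∀ i, y i ∈ S) ∧ StrictMono y := by
  constructor
  · intro h
    rw [UU, Finset.mem_filter, Fintype.mem_piFinset] at h
    exact ⟨h.1, fun i j hij => h.2 i j hij⟩
  · intro h
    rw [UU, Finset.mem_filter, Fintype.mem_piFinset]
    exact ⟨h.1, fun i j hij => h.2 hij⟩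

lemma gapO (L : ℤ) : ∀ a ∈ SetO L, ∀ b ∈ SetO L, a < b → a + 2 ≤ b := by
  intro a ha b hb hab
  rw [SetO, Finset.mem_filter] at ha hb
  obtain ⟨m, hm⟩ := ha.2
  obtain ⟨n, hn⟩ := hb.2
  omega

lemma gapE (L : ℤ) : ∀ a ∈ SetE L, ∀ b ∈ SetE L, a < b → a + 2 ≤ b := by
  intro a ha b hb hab
  rw [SetE, Finset.mem_filter] at ha hb
  obtain ⟨m, hm⟩ := ha.2
  obtain ⟨n, hn⟩ := hb.2
  omega

lemma prod_T1_eq_zero (w : ℤ → ℤ → ℂ) {S S' : Finset ℤ}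
    (hgap : ∀ a ∈ S, ∀ b ∈ S, a < b → a + 2 ≤ b)
    (hgap' : ∀ a ∈ S', ∀ b ∈ S', a < b → a + 2 ≤ b)
    {y z : Fin N → ℤ} (hy : y ∈ UU S N) (hz : z ∈ UU S' N)
    {σ : Equiv.Perm (Fin N)} (hσ : σ ≠ 1) :
    ∏ i, T1 w (y i) (z (σ i)) = 0 := by
  rw [mem_UU_iff] at hy hz
  by_contra h
  have hne : ∀ i : Fin N, T1 w (y i) (z (σ i)) ≠ 0 :=
    fun i => Finset.prod_ne_zero_iff.mp h i (Finset.mem_univ i)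
  have habs : ∀ i : Fin N, |y i - z (σ i)| = 1 := by
    intro i
    by_contra hc
    exact hne i (by simp [T1, hc])
  have hmono : StrictMono (σ : Fin N → Fin N) := by
    intro i j hij
    by_contra hle
    push_neg at hle
    have hne' : σ j ≠ σ i := fun hh => (Ne.symm (ne_of_lt hij)) (σ.injective hh)
    have h1 : σ j < σ i := lt_of_le_of_ne hle hne'
    have hz2 : z (σ j) + 2 ≤ z (σ i) :=
      hgap' _ (hz.1 _) _ (hz.1 _) (hz.2 h1)
    have hy2 : y i + 2 ≤ y j := hgap _ (hy.1 _) _ (hy.1 _) (hy.2 hij)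
    have a1 := habs i
    have a2 := habs j
    rw [abs_eq (by norm_num : (0:ℤ) ≤ 1)] at a1 a2
    omega
  have hrange : Set.range (σ : Fin N → Fin N) = Set.range (id : Fin N → Fin N) := by
    rw [Set.range_id]
    exact Set.range_eq_univ.mpr σ.surjective
  have heq : (σ : Fin N → Fin N) = id := strictMono_range_inj_fin hmono strictMono_id hrange
  exact hσ (Equiv.ext fun i => congrFun heq i)

lemma one_step (w : ℤ → ℤ → ℂ) (S S' : Finset ℤ)
    (hgap : ∀ a ∈ S, ∀ b ∈ S, a < b → a + 2 ≤ b)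
    (hgap' : ∀ a ∈ S', ∀ b ∈ S', a < b → a + 2 ≤ b)
    (φ φ' : K → ℤ → ℂ) (lam : K → ℂ)
    (hstep : ∀ kk : K, ∀ x ∈ S, ∑ x' ∈ S', T1 w x x' * φ' kk x' = lam kk * φ kk x)
    (k : Fin N → K) (y : Fin N → ℤ) (hy : y ∈ UU S N) :
    ∑ z ∈ UU S' N, TN w y z * BA φ' k z = (∏ a, lam (k a)) * BA φ k y := by
  have hyS : ∀ i, y i ∈ S := (mem_UU_iff.mp hy).1
  set F : (Fin N → ℤ) → ℂ := fun y' => (∏ i, T1 w (y i) (y' i)) * BA φ' k y' with hF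
  have key : ∑ y' ∈ Fintype.piFinset (fun _ : Fin N => S'), F y'
      = (∏ a, lam (k a)) * BA φ k y := by
    simp only [hF]
    unfold BA
    rw [Finset.mul_sum]
    simp_rw [Finset.mul_sum]
    rw [Finset.sum_comm]
    apply Finset.sum_congr rfl
    intro σ _
    have step1 : ∑ y' ∈ Fintype.piFinset (fun _ : Fin N => S'),
        (∏ i, T1 w (y i) (y' i)) *
          (((Equiv.Perm.sign σ : ℤ) : ℂ) * ∏ a, φ' (k (σ a)) (y' a))
        = ((Equiv.Perm.sign σ : ℤ) : ℂ) * ∑ y' ∈ Fintype.piFinset (fun _ : Fin N => S'),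
            ∏ i, (T1 w (y i) (y' i) * φ' (k (σ i)) (y' i)) := by
      rw [Finset.mul_sum]
      apply Finset.sum_congr rfl
      intro y' _
      rw [Finset.prod_mul_distrib]
      ring
    rw [step1,
      ← Finset.prod_univ_sum (fun _ : Fin N => S') (fun i v => T1 w (y i) v * φ' (k (σ i)) v)]
    rw [Finset.prod_congr rfl (fun i _ => hstep (k (σ i)) (y i) (hyS i)),
      Finset.prod_mul_distrib]
    rw [show (∏ i, lam (k (σ i))) = ∏ a, lam (k a) from Equiv.prod_comp σ (fun a => lam (k a))]
    ring
  have e3 : ∑ y' ∈ (Fintype.piFinset (fun _ : Fin N => S')).filter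
        (fun y' => Function.Injective y'), F y'
      = ∑ y' ∈ Fintype.piFinset (fun _ : Fin N => S'), F y' := by
    apply Finset.sum_filter_of_ne
    intro y' _ hne
    by_contra hni
    exact hne (by simp only [hF]; rw [BA_zero φ' k y' hni, mul_zero])
  have e2 : ∑ p ∈ (UU S' N) ×ˢ (Finset.univ : Finset (Equiv.Perm (Fin N))), F (p.1 ∘ p.2)
      = ∑ y' ∈ (Fintype.piFinset (fun _ : Fin N => S')).filter
        (fun y' => Function.Injective y'), F y' := by
    refine Finset.sum_nbij' (fun p => p.1 ∘ p.2)
      (fun y' => (y' ∘ (Tuple.sort y' : Equiv.Perm (Fin N)), (Tuple.sort y')⁻¹))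
      ?_ ?_ ?_ ?_ ?_
    · rintro ⟨z, σ⟩ hp
      rw [Finset.mem_product] at hp
      obtain ⟨hz, -⟩ := hp
      rw [mem_UU_iff] at hz
      rw [Finset.mem_filter, Fintype.mem_piFinset]
      exact ⟨fun i => hz.1 _, hz.2.injective.comp σ.injective⟩
    · intro y' hy'
      rw [Finset.mem_filter, Fintype.mem_piFinset] at hy'
      rw [Finset.mem_product]
      refine ⟨mem_UU_iff.mpr ⟨fun i => hy'.1 _, ?_⟩, Finset.mem_univ _⟩
      exact (Tuple.monotone_sort y').strictMono_of_injective
        (hy'.2.comp (Tuple.sort y').injective)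
    · rintro ⟨z, σ⟩ hp
      rw [Finset.mem_product] at hp
      obtain ⟨hz, -⟩ := hp
      rw [mem_UU_iff] at hz
      set g : Fin N → ℤ := z ∘ σ with hg
      set τ : Equiv.Perm (Fin N) := Tuple.sort g with hτ
      have hginj : Function.Injective g := hz.2.injective.comp σ.injective
      have hsm : StrictMono (g ∘ τ) :=
        (Tuple.monotone_sort g).strictMono_of_injective (hginj.comp τ.injective)
      have hr : Set.range (g ∘ τ) = Set.range z := by
        rw [τ.surjective.range_comp, hg, σ.surjective.range_comp]
      have heq : g ∘ τ = z := strictMono_range_inj_fin hsm hz.2 hr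
      have hστ : ∀ a, σ (τ a) = a := by
        intro a
        have := congrFun heq a
        simp only [Function.comp_apply, hg] at this
        exact hz.2.injective this
      have hτσ : τ = σ⁻¹ := Equiv.ext fun a => σ.injective (by simp [hστ])
      have hfin : τ⁻¹ = σ := by rw [hτσ]; simp
      simp only [Prod.mk.injEq]
      exact ⟨heq, hfin⟩
    · intro y' _
      funext a
      simp
    · rintro ⟨z, σ⟩ _
      rfl
  have e1 : ∑ p ∈ (UU S' N) ×ˢ (Finset.univ : Finset (Equiv.Perm (Fin N))), F (p.1 ∘ p.2)
      = ∑ z ∈ UU S' N, TN w y z * BA φ' k z := by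
    rw [Finset.sum_product]
    apply Finset.sum_congr rfl
    intro z hz
    rw [Finset.sum_eq_single (1 : Equiv.Perm (Fin N))]
    · simp [hF, TN]
    · intro σ _ hσ
      have h0 : ∏ i, T1 w (y i) (z (σ i)) = 0 := prod_T1_eq_zero w hgap hgap' hy hz hσ
      simp only [hF, Function.comp_apply]
      rw [h0, zero_mul]
    · intro h; exact absurd (Finset.mem_univ _) h
  calc ∑ z ∈ UU S' N, TN w y z * BA φ' k z
      = ∑ p ∈ (UU S' N) ×ˢ (Finset.univ : Finset (Equiv.Perm (Fin N))), F (p.1 ∘ p.2) :=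
        e1.symm
    _ = ∑ y' ∈ (Fintype.piFinset (fun _ : Fin N => S')).filter
          (fun y' => Function.Injective y'), F y' := e2
    _ = ∑ y' ∈ Fintype.piFinset (fun _ : Fin N => S'), F y' := e3
    _ = (∏ a, lam (k a)) * BA φ k y := key

end AuxBethe

/-- the Bethe Ansatz vectors are right eigenvectors of the two-step `N`-walk
transfer matrices `T_N^{e·e}` and `T_N^{o·o}` with eigenvalue `Λ_k²`. -/
theorem bethe_two_step_eigen (L : ℤ) (hL : Odd L) (hL1 : 1 ≤ L) (w : ℤ → ℤ → ℂ)
    (K : Type*) [Fintype K] [LinearOrder K] (φo φe : K → ℤ → ℂ) (lam : K → ℂ)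
    (heo : ∀ k, ∀ y ∈ SetE L, ∑ y' ∈ SetO L, T1 w y y' * φo k y' = lam k * φe k y)
    (hoe : ∀ k, ∀ y ∈ SetO L, ∑ y' ∈ SetE L, T1 w y y' * φe k y' = lam k * φo k y)
    (N : ℕ) (hN : 1 ≤ N) (k : Fin N → K) (hk : k ∈ UU (Finset.univ : Finset K) N) :
    (∀ y ∈ UU (SetE L) N,
        ∑ y' ∈ UU (SetE L) N,
            (∑ z ∈ UU (SetO L) N, TN w y z * TN w z y') * BA φe k y' =
          (∏ a, lam (k a)) ^ 2 * BA φe k y) ∧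
    (∀ y ∈ UU (SetO L) N,
        ∑ y' ∈ UU (SetO L) N,
            (∑ z ∈ UU (SetE L) N, TN w y z * TN w z y') * BA φo k y' =
          (∏ a, lam (k a)) ^ 2 * BA φo k y) := by
  constructor
  · intro y hy
    calc ∑ y' ∈ UU (SetE L) N, (∑ z ∈ UU (SetO L) N, TN w y z * TN w z y') * BA φe k y'
        = ∑ z ∈ UU (SetO L) N, TN w y z * ∑ y' ∈ UU (SetE L) N, TN w z y' * BA φe k y' := by
          simp_rw [Finset.sum_mul]
          rw [Finset.sum_comm]
          simp_rw [Finset.mul_sum, mul_assoc]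
      _ = ∑ z ∈ UU (SetO L) N, TN w y z * ((∏ a, lam (k a)) * BA φo k z) := by
          apply Finset.sum_congr rfl
          intro z hz
          rw [one_step w (SetO L) (SetE L) (gapO L) (gapE L) φo φe lam
            (fun kk x hx => hoe kk x hx) k z hz]
      _ = (∏ a, lam (k a)) * ∑ z ∈ UU (SetO L) N, TN w y z * BA φo k z := by
          rw [Finset.mul_sum]; apply Finset.sum_congr rfl; intro z _; ring
      _ = (∏ a, lam (k a)) ^ 2 * BA φe k y := by
          rw [one_step w (SetE L) (SetO L) (gapE L) (gapO L) φe φo lam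
            (fun kk x hx => heo kk x hx) k y hy]
          ring
  · intro y hy
    calc ∑ y' ∈ UU (SetO L) N, (∑ z ∈ UU (SetE L) N, TN w y z * TN w z y') * BA φo k y'
        = ∑ z ∈ UU (SetE L) N, TN w y z * ∑ y' ∈ UU (SetO L) N, TN w z y' * BA φo k y' := by
          simp_rw [Finset.sum_mul]
          rw [Finset.sum_comm]
          simp_rw [Finset.mul_sum, mul_assoc]
      _ = ∑ z ∈ UU (SetE L) N, TN w y z * ((∏ a, lam (k a)) * BA φe k z) := by
          apply Finset.sum_congr rfl
          intro z hz
          rw [one_step w (SetE L) (SetO L) (gapE L) (gapO L) φe φo lam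
            (fun kk x hx => heo kk x hx) k z hz]
      _ = (∏ a, lam (k a)) * ∑ z ∈ UU (SetE L) N, TN w y z * BA φe k z := by
          rw [Finset.mul_sum]; apply Finset.sum_congr rfl; intro z _; ring
      _ = (∏ a, lam (k a)) ^ 2 * BA φo k y := by
          rw [one_step w (SetO L) (SetE L) (gapO L) (gapE L) φo φe lam
            (fun kk x hx => hoe kk x hx) k y hy]
          ring
end

section
/- Left Bethe Ansatz relations (Theorem 1(b)(iii)): under the one-walk Bethe hypotheses, for every N ≥ 1 and every k ∈ K_N the conjugated row vectors built from the dual family satisfy (Ψ^o_k)* T_N^{oe} = Λ_k (Ψ^e_k)* and (Ψ^e_k)* T_N^{eo} = Λ_k (Ψ^o_k)*; consequently (Ψ^e_k)* is a left eigenvector of T_N^{e·e} = T_N^{eo} T_N^{oe} with eigenvalue Λ_k² and (Ψ^o_k)* is a left eigenvector of T_N^{o·o} = T_N^{oe} T_N^{eo} with eigenvalue Λ_k². -/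
open Finset BigOperators
open scoped Classical

section BetheAux

lemma star_BA {K X : Type*} {N : ℕ} (φ : K → X → ℂ) (k : Fin N → K) (y : Fin N → X) :
    star (BA φ k y) = BA (fun a b => star (φ a b)) k y := by
  unfold BA
  rw [star_sum]
  refine Finset.sum_congr rfl fun σ _ => ?_
  rw [star_mul', star_prod, star_intCast]

lemma BA_det {K X : Type*} {N : ℕ} (φ : K → X → ℂ) (k : Fin N → K) (y : Fin N → X) :
    BA φ k y = Matrix.det (Matrix.of fun a b => φ (k a) (y b)) := by
  rw [Matrix.det_apply]
  refine Finset.sum_congr rfl fun σ _ => ?_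
  rw [Units.smul_def, zsmul_eq_mul]
  rfl

lemma BA_eq_zero {K X : Type*} {N : ℕ} (φ : K → X → ℂ) (k : Fin N → K) (y : Fin N → X)
    {i j : Fin N} (hij : i ≠ j) (h : y i = y j) : BA φ k y = 0 := by
  rw [BA_det]
  exact Matrix.det_zero_of_column_eq hij (fun a => by simp [h])

/-- One-walk left relation derived from the right relations, biorthogonality and
completeness. -/
lemma left_one {K : Type*} [Fintype K] [LinearOrder K] (w : ℤ → ℤ → ℂ)
    (SA SB : Finset ℤ) (φA φB ψA ψB : K → ℤ → ℂ) (lam : K → ℂ)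
    (hT : ∀ k, ∀ y ∈ SA, ∑ z ∈ SB, T1 w y z * φB k z = lam k * φA k y)
    (hort : ∀ k k' : K, ∑ y ∈ SA, star (ψA k y) * φA k' y = if k = k' then 1 else 0)
    (hcomp : ∀ y ∈ SB, ∀ y' ∈ SB, ∑ kk : K, φB kk y * star (ψB kk y') = if y = y' then 1 else 0)
    (k : K) : ∀ y' ∈ SB, ∑ y ∈ SA, star (ψA k y) * T1 w y y' = lam k * star (ψB k y') := by
  intro y' hy'
  have key : ∀ y ∈ SA, T1 w y y' = ∑ k' : K, lam k' * φA k' y * star (ψB k' y') := by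
    intro y hy
    have h0 : T1 w y y' = ∑ z ∈ SB, T1 w y z * (if z = y' then (1:ℂ) else 0) := by
      rw [Finset.sum_congr rfl (fun z _ => by rw [mul_ite, mul_one, mul_zero]),
        Finset.sum_ite_eq' SB y' (fun z => T1 w y z), if_pos hy']
    rw [h0, Finset.sum_congr rfl (fun z hz => by rw [← hcomp z hz y' hy'])]
    rw [Finset.sum_congr rfl (fun z _ => Finset.mul_sum _ _ _), Finset.sum_comm]
    refine Finset.sum_congr rfl fun k' _ => ?_
    rw [← hT k' y hy, Finset.sum_mul]
    exact Finset.sum_congr rfl fun z _ => by ring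
  rw [Finset.sum_congr rfl (fun y hy => by rw [key y hy, Finset.mul_sum]), Finset.sum_comm]
  have : ∀ k' : K, ∑ y ∈ SA, star (ψA k y) * (lam k' * φA k' y * star (ψB k' y'))
      = (if k = k' then (1:ℂ) else 0) * (lam k' * star (ψB k' y')) := by
    intro k'
    rw [← hort k k', Finset.sum_mul]
    exact Finset.sum_congr rfl fun y _ => by ring
  rw [Finset.sum_congr rfl fun k' _ => this k']
  simp [Finset.sum_ite_eq, ite_mul]

/-- `N`-walk left relation derived from the one-walk left relation. -/
lemma left_N {K : Type*} [Fintype K] {N : ℕ} (w : ℤ → ℤ → ℂ)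
    (SA SB : Finset ℤ) (ψA ψB : K → ℤ → ℂ) (lam : K → ℂ)
    (hgap : ∀ a ∈ SB, ∀ b ∈ SB, a < b → a + 2 ≤ b)
    (k : Fin N → K)
    (h1 : ∀ kk : K, ∀ y' ∈ SB, ∑ y ∈ SA, star (ψA kk y) * T1 w y y' = lam kk * star (ψB kk y')) :
    ∀ y' ∈ UU SB N, ∑ y ∈ UU SA N, star (BA ψA k y) * TN w y y' =
      (∏ a, lam (k a)) * star (BA ψB k y') := by
  intro y' hy'
  rw [UU, Finset.mem_filter, Fintype.mem_piFinset] at hy'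
  obtain ⟨hy'mem, hy'inc⟩ := hy'
  -- extend the sum from strictly increasing tuples to all tuples
  have hext : ∑ y ∈ UU SA N, star (BA ψA k y) * TN w y y'
      = ∑ y ∈ Fintype.piFinset (fun _ : Fin N => SA), star (BA ψA k y) * TN w y y' := by
    rw [← Finset.sum_filter_add_sum_filter_not (Fintype.piFinset fun _ : Fin N => SA)
      (fun y => ∀ i j : Fin N, i < j → y i < y j)]
    rw [show (UU SA N) = (Fintype.piFinset fun _ : Fin N => SA).filter
      (fun y => ∀ i j : Fin N, i < j → y i < y j) from rfl]
    rw [Finset.sum_eq_zero (s := (Fintype.piFinset fun _ : Fin N => SA).filter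
      (fun y => ¬ ∀ i j : Fin N, i < j → y i < y j)) ?_, add_zero]
    intro y hy
    rw [Finset.mem_filter] at hy
    obtain ⟨-, hnot⟩ := hy
    by_cases hT : TN w y y' = 0
    · rw [hT, mul_zero]
    have hadj : ∀ i, y i ≤ y' i + 1 ∧ y' i - 1 ≤ y i := by
      intro i
      have hi : T1 w (y i) (y' i) ≠ 0 := fun h => hT (by
        rw [TN]; exact Finset.prod_eq_zero (Finset.mem_univ i) h)
      have : |y i - y' i| = 1 := by
        by_contra hc; exact hi (by rw [T1, if_neg hc])
      rw [abs_eq (by norm_num)] at this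
      omega
    have hmono : ∀ i j : Fin N, i < j → y i ≤ y j := by
      intro i j hij
      have h2 := hgap _ (hy'mem i) _ (hy'mem j) (hy'inc i j hij)
      have h3 := hadj i; have h4 := hadj j
      omega
    push_neg at hnot
    obtain ⟨i, j, hij, hge⟩ := hnot
    have heq : y i = y j := le_antisymm (hmono i j hij) hge
    rw [star_BA, BA_eq_zero _ _ _ (ne_of_lt hij) heq, zero_mul]
  rw [hext]
  -- exchange sums, factorize over the columns
  have hswap : ∑ y ∈ Fintype.piFinset (fun _ : Fin N => SA), star (BA ψA k y) * TN w y y'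
      = ∑ σ : Equiv.Perm (Fin N), ((Equiv.Perm.sign σ : ℤ) : ℂ) *
          ∏ a, (∑ z ∈ SA, star (ψA (k (σ a)) z) * T1 w z (y' a)) := by
    rw [Finset.sum_congr rfl (fun y _ => by
      rw [star_BA, BA, Finset.sum_mul]), Finset.sum_comm]
    refine Finset.sum_congr rfl fun σ _ => ?_
    rw [Finset.prod_univ_sum, Finset.mul_sum]
    refine Finset.sum_congr rfl fun y _ => ?_
    rw [mul_assoc, TN, ← Finset.prod_mul_distrib]
  rw [hswap]
  rw [Finset.sum_congr rfl (fun σ _ => by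
    rw [Finset.prod_congr rfl (fun a _ => h1 (k (σ a)) (y' a) (hy'mem a)),
      Finset.prod_mul_distrib, Equiv.prod_comp σ (fun a => lam (k a))])]
  rw [star_BA, BA, Finset.mul_sum]
  exact Finset.sum_congr rfl fun σ _ => by ring

end BetheAux

/-- left Bethe Ansatz relations (Theorem 1(b)(iii)): the conjugated dual
Bethe vectors satisfy the left cyclic relations and are left eigenvectors of the two-step
`N`-walk transfer matrices with eigenvalue `Λ_k²`. -/
theorem bethe_left_relations (L : ℤ) (hL : Odd L) (hL1 : 1 ≤ L) (w : ℤ → ℤ → ℂ)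
    (K : Type*) [Fintype K] [LinearOrder K] (hK : Fintype.card K = ((L + 1) / 2).toNat)
    (φo φe ψo ψe : K → ℤ → ℂ) (lam : K → ℂ)
    (heo : ∀ k, ∀ y ∈ SetE L, ∑ y' ∈ SetO L, T1 w y y' * φo k y' = lam k * φe k y)
    (hoe : ∀ k, ∀ y ∈ SetO L, ∑ y' ∈ SetE L, T1 w y y' * φe k y' = lam k * φo k y)
    (horto : ∀ k k' : K, ∑ y ∈ SetO L, star (ψo k y) * φo k' y = if k = k' then 1 else 0)
    (horte : ∀ k k' : K, ∑ y ∈ SetE L, star (ψe k y) * φe k' y = if k = k' then 1 else 0)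
    (hcompo : ∀ y ∈ SetO L, ∀ y' ∈ SetO L,
      ∑ k : K, φo k y * star (ψo k y') = if y = y' then 1 else 0)
    (hcompe : ∀ y ∈ SetE L, ∀ y' ∈ SetE L,
      ∑ k : K, φe k y * star (ψe k y') = if y = y' then 1 else 0)
    (N : ℕ) (hN : 1 ≤ N) (k : Fin N → K) (hk : k ∈ UU (Finset.univ : Finset K) N) :
    (∀ y' ∈ UU (SetE L) N,
        ∑ y ∈ UU (SetO L) N, star (BA ψo k y) * TN w y y' =
          (∏ a, lam (k a)) * star (BA ψe k y')) ∧
    (∀ y' ∈ UU (SetO L) N,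
        ∑ y ∈ UU (SetE L) N, star (BA ψe k y) * TN w y y' =
          (∏ a, lam (k a)) * star (BA ψo k y')) ∧
    (∀ y' ∈ UU (SetE L) N,
        ∑ y ∈ UU (SetE L) N,
            star (BA ψe k y) * (∑ z ∈ UU (SetO L) N, TN w y z * TN w z y') =
          (∏ a, lam (k a)) ^ 2 * star (BA ψe k y')) ∧
    (∀ y' ∈ UU (SetO L) N,
        ∑ y ∈ UU (SetO L) N,
            star (BA ψo k y) * (∑ z ∈ UU (SetE L) N, TN w y z * TN w z y') =
          (∏ a, lam (k a)) ^ 2 * star (BA ψo k y')) := by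
  have gapE : ∀ a ∈ SetE L, ∀ b ∈ SetE L, a < b → a + 2 ≤ b := by
    intro a ha b hb hab
    rw [SetE, Finset.mem_filter] at ha hb
    obtain ⟨-, r, hr⟩ := ha; obtain ⟨-, s, hs⟩ := hb
    omega
  have gapO : ∀ a ∈ SetO L, ∀ b ∈ SetO L, a < b → a + 2 ≤ b := by
    intro a ha b hb hab
    rw [SetO, Finset.mem_filter] at ha hb
    obtain ⟨-, r, hr⟩ := ha; obtain ⟨-, s, hs⟩ := hb
    omega
  have h1oe := left_one w (SetO L) (SetE L) φo φe ψo ψe lam hoe horto hcompe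
  have h1eo := left_one w (SetE L) (SetO L) φe φo ψe ψo lam heo horte hcompo
  have main1 := left_N w (SetO L) (SetE L) ψo ψe lam gapE k h1oe
  have main2 := left_N w (SetE L) (SetO L) ψe ψo lam gapO k h1eo
  refine ⟨main1, main2, ?_, ?_⟩
  · intro y' hy'
    rw [Finset.sum_congr rfl (fun y _ => Finset.mul_sum _ _ _), Finset.sum_comm]
    have step : ∀ z ∈ UU (SetO L) N,
        ∑ y ∈ UU (SetE L) N, star (BA ψe k y) * (TN w y z * TN w z y')
          = (∏ a, lam (k a)) * star (BA ψo k z) * TN w z y' := by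
      intro z hz
      have : ∑ y ∈ UU (SetE L) N, star (BA ψe k y) * (TN w y z * TN w z y')
          = (∑ y ∈ UU (SetE L) N, star (BA ψe k y) * TN w y z) * TN w z y' := by
        rw [Finset.sum_mul]
        exact Finset.sum_congr rfl fun y _ => by ring
      rw [this, main2 z hz]
    rw [Finset.sum_congr rfl step]
    calc ∑ z ∈ UU (SetO L) N, (∏ a, lam (k a)) * star (BA ψo k z) * TN w z y'
        = (∏ a, lam (k a)) * ∑ z ∈ UU (SetO L) N, star (BA ψo k z) * TN w z y' := by
          rw [Finset.mul_sum]
          exact Finset.sum_congr rfl fun z _ => by ring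
      _ = (∏ a, lam (k a)) * ((∏ a, lam (k a)) * star (BA ψe k y')) := by rw [main1 y' hy']
      _ = (∏ a, lam (k a)) ^ 2 * star (BA ψe k y') := by ring
  · intro y' hy'
    rw [Finset.sum_congr rfl (fun y _ => Finset.mul_sum _ _ _), Finset.sum_comm]
    have step : ∀ z ∈ UU (SetE L) N,
        ∑ y ∈ UU (SetO L) N, star (BA ψo k y) * (TN w y z * TN w z y')
          = (∏ a, lam (k a)) * star (BA ψe k z) * TN w z y' := by
      intro z hz
      have : ∑ y ∈ UU (SetO L) N, star (BA ψo k y) * (TN w y z * TN w z y')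
          = (∑ y ∈ UU (SetO L) N, star (BA ψo k y) * TN w y z) * TN w z y' := by
        rw [Finset.sum_mul]
        exact Finset.sum_congr rfl fun y _ => by ring
      rw [this, main1 z hz]
    rw [Finset.sum_congr rfl step]
    calc ∑ z ∈ UU (SetE L) N, (∏ a, lam (k a)) * star (BA ψe k z) * TN w z y'
        = (∏ a, lam (k a)) * ∑ z ∈ UU (SetE L) N, star (BA ψe k z) * TN w z y' := by
          rw [Finset.mul_sum]
          exact Finset.sum_congr rfl fun z _ => by ring
      _ = (∏ a, lam (k a)) * ((∏ a, lam (k a)) * star (BA ψo k y')) := by rw [main2 y' hy']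
      _ = (∏ a, lam (k a)) ^ 2 * star (BA ψo k y') := by ring
end
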